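/- arXiv:1206.1885 — 2 statements merged into one kernel-verified Lean document; each statement's English description precedes it below -/
import Mathlib

section
/- Let (X, μ) be a measure space with 0 < μ(X) < ∞, let n > 2 be a real number, and let A > 0 and C ≥ 0 be constants. Let φ_k : X → ℝ be measurable functions and u_k : X → ℝ measurable functions with u_k(x) > 0 for every x ∈ X. Assume that for every k: ∫_X e^{n φ_k} dμ = A, ∫_X e^{2 φ_k} / u_k dμ ≤ C, each function e^{n φ_k} u_k is integrable, and ∫_X e^{n φ_k} u_k dμ → 0 as k → ∞. Then: (a) for every real s with 1 ≤ s < n one has ∫_X e^{s φ_k} dμ → 0 as k → ∞; and (b) ∫_X e^{n φ_k} / u_k dμ → ∞ as k → ∞ (the integrals taken with values in [0, ∞]). -/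
open MeasureTheory Filter Real
open scoped ENNReal

private lemma ofReal_exp_rpow (z c : ℝ) :
    ENNReal.ofReal (Real.exp z) ^ c = ENNReal.ofReal (Real.exp (c * z)) := by
  rw [ENNReal.ofReal_rpow_of_pos (Real.exp_pos z)]
  congr 1
  rw [Real.rpow_def_of_pos (Real.exp_pos z), Real.log_exp, mul_comm]

theorem effective_potential_core
    {X : Type*} [MeasurableSpace X] (μ : Measure X)
    (hμ0 : 0 < μ Set.univ) (hμfin : μ Set.univ < ⊤)
    (n : ℝ) (hn : 2 < n) (A C : ℝ) (hA : 0 < A) (hC : 0 ≤ C)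
    (φ u : ℕ → X → ℝ)
    (hφ : ∀ k, Measurable (φ k)) (hu : ∀ k, Measurable (u k))
    (hupos : ∀ k x, 0 < u k x)
    (hvol : ∀ k, ∫⁻ x, ENNReal.ofReal (Real.exp (n * φ k x)) ∂μ = ENNReal.ofReal A)
    (hcurv : ∀ k, ∫⁻ x, ENNReal.ofReal (Real.exp (2 * φ k x) / u k x) ∂μ ≤ ENNReal.ofReal C)
    (hint : ∀ k, Integrable (fun x => Real.exp (n * φ k x) * u k x) μ)
    (hwarp : Tendsto (fun k => ∫⁻ x, ENNReal.ofReal (Real.exp (n * φ k x) * u k x) ∂μ)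
      atTop (nhds 0)) :
    (∀ s : ℝ, 1 ≤ s → s < n →
      Tendsto (fun k => ∫⁻ x, ENNReal.ofReal (Real.exp (s * φ k x)) ∂μ) atTop (nhds 0)) ∧
    Tendsto (fun k => ∫⁻ x, ENNReal.ofReal (Real.exp (n * φ k x) / u k x) ∂μ)
      atTop (nhds ⊤) := by
  have hn0 : (0:ℝ) < n := by linarith
  -- rewrite integrands as exponentials
  have hFx : ∀ k x, Real.exp (n * φ k x) * u k x
      = Real.exp (n * φ k x + Real.log (u k x)) := fun k x => by
    rw [Real.exp_add, Real.exp_log (hupos k x)]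
  have hGx : ∀ k x, Real.exp (2 * φ k x) / u k x
      = Real.exp (2 * φ k x - Real.log (u k x)) := fun k x => by
    rw [Real.exp_sub, Real.exp_log (hupos k x)]
  have hKx : ∀ k x, Real.exp (n * φ k x) / u k x
      = Real.exp (n * φ k x - Real.log (u k x)) := fun k x => by
    rw [Real.exp_sub, Real.exp_log (hupos k x)]
  -- measurability facts
  have hFm : ∀ k, Measurable fun x => ENNReal.ofReal (Real.exp (n * φ k x) * u k x) :=
    fun k => ((Real.measurable_exp.comp ((hφ k).const_mul n)).mul (hu k)).ennreal_ofReal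
  have hGm : ∀ k, Measurable fun x => ENNReal.ofReal (Real.exp (2 * φ k x) / u k x) :=
    fun k => ((Real.measurable_exp.comp ((hφ k).const_mul 2)).div (hu k)).ennreal_ofReal
  have hKm : ∀ k, Measurable fun x => ENNReal.ofReal (Real.exp (n * φ k x) / u k x) :=
    fun k => ((Real.measurable_exp.comp ((hφ k).const_mul n)).div (hu k)).ennreal_ofReal
  have hHm : ∀ k, Measurable fun x => ENNReal.ofReal (Real.exp (n * φ k x)) :=
    fun k => (Real.measurable_exp.comp ((hφ k).const_mul n)).ennreal_ofReal
  constructor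
  · -- part (a)
    intro s hs1 hsn
    set a := min (s / (n + 2)) ((n - s) / (n - 2)) with hadef
    have ha0 : 0 < a :=
      lt_min (div_pos (by linarith) (by linarith)) (div_pos (by linarith) (by linarith))
    have ha1 : a * (n + 2) ≤ s := by
      have := min_le_left (s / (n + 2)) ((n - s) / (n - 2))
      rw [le_div_iff₀ (by linarith)] at this
      linarith
    have ha2 : a * (n - 2) ≤ n - s := by
      have := min_le_right (s / (n + 2)) ((n - s) / (n - 2))
      rw [le_div_iff₀ (by linarith)] at this
      linarith
    set g := (s - (n + 2) * a) / n with hgdef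
    have hg0 : 0 ≤ g := div_nonneg (by linarith) hn0.le
    set d := 1 - (a + a + g) with hddef
    have hdd : d = ((n - s) - (n - 2) * a) / n := by
      rw [hddef, hgdef]; field_simp; ring
    have hd0 : 0 ≤ d := by rw [hdd]; exact div_nonneg (by linarith) hn0.le
    have hsum : n * a + 2 * a + n * g = s := by
      rw [hgdef]; field_simp; ring
    -- pointwise Hölder decomposition
    have hpt : ∀ k x, ENNReal.ofReal (Real.exp (s * φ k x)) =
        ENNReal.ofReal (Real.exp (n * φ k x) * u k x) ^ a *
        ENNReal.ofReal (Real.exp (2 * φ k x) / u k x) ^ a *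
        ENNReal.ofReal (Real.exp (n * φ k x)) ^ g := by
      intro k x
      rw [hFx k x, hGx k x, ofReal_exp_rpow, ofReal_exp_rpow, ofReal_exp_rpow,
        ← ENNReal.ofReal_mul (Real.exp_nonneg _), ← Real.exp_add,
        ← ENNReal.ofReal_mul (Real.exp_nonneg _), ← Real.exp_add]
      congr 2
      linear_combination (-(φ k x)) * hsum
    -- Hölder inequality with four factors
    have hHolder : ∀ k, (∫⁻ x, ENNReal.ofReal (Real.exp (s * φ k x)) ∂μ) ≤
        (∫⁻ x, ENNReal.ofReal (Real.exp (n * φ k x) * u k x) ∂μ) ^ a *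
        (∫⁻ x, ENNReal.ofReal (Real.exp (2 * φ k x) / u k x) ∂μ) ^ a *
        (∫⁻ x, ENNReal.ofReal (Real.exp (n * φ k x)) ∂μ) ^ g *
        (μ Set.univ) ^ d := by
      intro k
      have key := ENNReal.lintegral_prod_norm_pow_le (μ := μ) Finset.univ
        (f := ![fun x => ENNReal.ofReal (Real.exp (n * φ k x) * u k x),
                fun x => ENNReal.ofReal (Real.exp (2 * φ k x) / u k x),
                fun x => ENNReal.ofReal (Real.exp (n * φ k x)),
                fun _ => 1])
        (p := ![a, a, g, d])
        (by
          intro i _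
          fin_cases i
          · exact (hFm k).aemeasurable
          · exact (hGm k).aemeasurable
          · exact (hHm k).aemeasurable
          · exact aemeasurable_const)
        (by simp [Fin.sum_univ_four]; rw [hddef]; ring)
        (by
          intro i _
          fin_cases i
          · exact ha0.le
          · exact ha0.le
          · exact hg0
          · exact hd0)
      simp only [Fin.prod_univ_four, Matrix.cons_val_zero, Matrix.cons_val_one,
        Matrix.head_cons, Matrix.cons_val_two, Matrix.tail_cons, Matrix.cons_val_three,
        ENNReal.one_rpow, mul_one, lintegral_one] at key
      calc (∫⁻ x, ENNReal.ofReal (Real.exp (s * φ k x)) ∂μ)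
          = ∫⁻ x, ENNReal.ofReal (Real.exp (n * φ k x) * u k x) ^ a *
              ENNReal.ofReal (Real.exp (2 * φ k x) / u k x) ^ a *
              ENNReal.ofReal (Real.exp (n * φ k x)) ^ g ∂μ := by
            exact lintegral_congr fun x => hpt k x
        _ ≤ _ := key
    -- the bound tends to zero
    set K : ℝ≥0∞ := ENNReal.ofReal C ^ a * ENNReal.ofReal A ^ g * μ Set.univ ^ d with hKdef
    have hKne : K ≠ ⊤ := by
      rw [hKdef]
      exact ENNReal.mul_ne_top
        (ENNReal.mul_ne_top (ENNReal.rpow_ne_top_of_nonneg ha0.le ENNReal.ofReal_ne_top)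
          (ENNReal.rpow_ne_top_of_nonneg hg0 ENNReal.ofReal_ne_top))
        (ENNReal.rpow_ne_top_of_nonneg hd0 hμfin.ne)
    have hbound : ∀ k, (∫⁻ x, ENNReal.ofReal (Real.exp (s * φ k x)) ∂μ) ≤
        (∫⁻ x, ENNReal.ofReal (Real.exp (n * φ k x) * u k x) ∂μ) ^ a * K := by
      intro k
      refine (hHolder k).trans ?_
      rw [hKdef, hvol k]
      calc _ ≤ ((∫⁻ x, ENNReal.ofReal (Real.exp (n * φ k x) * u k x) ∂μ) ^ a *
            ENNReal.ofReal C ^ a) * ENNReal.ofReal A ^ g * μ Set.univ ^ d := by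
            gcongr
            exact hcurv k
        _ = _ := by ring
    have htend : Tendsto (fun k =>
        (∫⁻ x, ENNReal.ofReal (Real.exp (n * φ k x) * u k x) ∂μ) ^ a * K) atTop (nhds 0) := by
      have h1 : Tendsto (fun k =>
          (∫⁻ x, ENNReal.ofReal (Real.exp (n * φ k x) * u k x) ∂μ) ^ a) atTop (nhds 0) := by
        have := (ENNReal.continuous_rpow_const (y := a)).tendsto 0 |>.comp hwarp
        simpa [Function.comp_def, ENNReal.zero_rpow_of_pos ha0] using this
      have := ENNReal.Tendsto.mul_const h1 (Or.inr hKne)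
      simpa using this
    exact tendsto_of_tendsto_of_tendsto_of_le_of_le tendsto_const_nhds htend
      (fun k => zero_le) hbound
  · -- part (b)
    -- Cauchy–Schwarz: A ≤ (∫ e^{nφ} u)^{1/2} (∫ e^{nφ}/u)^{1/2}
    have hCS : ∀ k, ENNReal.ofReal A ≤
        (∫⁻ x, ENNReal.ofReal (Real.exp (n * φ k x) * u k x) ∂μ) ^ ((1:ℝ)/2) *
        (∫⁻ x, ENNReal.ofReal (Real.exp (n * φ k x) / u k x) ∂μ) ^ ((1:ℝ)/2) := by
      intro k
      have key := ENNReal.lintegral_prod_norm_pow_le (μ := μ) Finset.univ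
        (f := ![fun x => ENNReal.ofReal (Real.exp (n * φ k x) * u k x),
                fun x => ENNReal.ofReal (Real.exp (n * φ k x) / u k x)])
        (p := ![(1:ℝ)/2, (1:ℝ)/2])
        (by
          intro i _
          fin_cases i
          · exact (hFm k).aemeasurable
          · exact (hKm k).aemeasurable)
        (by simp [Fin.sum_univ_two]; norm_num)
        (by intro i _; fin_cases i <;> norm_num)
      simp only [Fin.prod_univ_two, Matrix.cons_val_zero, Matrix.cons_val_one,
        Matrix.head_cons] at key
      rw [← hvol k]
      refine le_trans (le_of_eq (lintegral_congr fun x => ?_)) key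
      rw [hFx k x, hKx k x, ofReal_exp_rpow, ofReal_exp_rpow,
        ← ENNReal.ofReal_mul (Real.exp_nonneg _), ← Real.exp_add]
      congr 2
      ring
    have hsq : ∀ k, (ENNReal.ofReal A) ^ 2 ≤
        (∫⁻ x, ENNReal.ofReal (Real.exp (n * φ k x) * u k x) ∂μ) *
        (∫⁻ x, ENNReal.ofReal (Real.exp (n * φ k x) / u k x) ∂μ) := by
      intro k
      have := ENNReal.rpow_le_rpow (hCS k) (by norm_num : (0:ℝ) ≤ 2)
      rw [ENNReal.mul_rpow_of_nonneg _ _ (by norm_num : (0:ℝ) ≤ 2),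
        ← ENNReal.rpow_mul, ← ENNReal.rpow_mul] at this
      norm_num at this
      exact this
    have hAne : (ENNReal.ofReal A) ^ 2 ≠ 0 :=
      pow_ne_zero 2 (ENNReal.ofReal_pos.mpr hA).ne'
    have hlow : ∀ k, (ENNReal.ofReal A) ^ 2 /
        (∫⁻ x, ENNReal.ofReal (Real.exp (n * φ k x) * u k x) ∂μ) ≤
        ∫⁻ x, ENNReal.ofReal (Real.exp (n * φ k x) / u k x) ∂μ := fun k =>
      ENNReal.div_le_of_le_mul' (hsq k)
    have hdiv : Tendsto (fun k => (ENNReal.ofReal A) ^ 2 /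
        (∫⁻ x, ENNReal.ofReal (Real.exp (n * φ k x) * u k x) ∂μ)) atTop (nhds ⊤) := by
      have := ENNReal.Tendsto.const_div (a := (ENNReal.ofReal A) ^ 2) hwarp
        (Or.inl (by simp))
      rwa [ENNReal.div_zero hAne] at this
    exact tendsto_nhds_top_mono hdiv (Eventually.of_forall hlow)
end

section
/- Let (X, μ) be a measure space with 0 < μ(X) < ∞, let n > 2 be a real number, and let A > 0, C > 0, η > 0 be constants. Then there is no pair of sequences (φ_k), (u_k) of measurable functions on X with u_k(x) > 0 for all x, satisfying for every k: ∫_X e^{n φ_k} dμ = A, ∫_X e^{2 φ_k}/u_k dμ ≤ C, ∫_X |φ_k| dμ ≤ η, each e^{n φ_k} u_k integrable, and ∫_X e^{n φ_k} u_k dμ → 0 as k → ∞. -/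
open MeasureTheory Filter Real

theorem no_unbounded_sequence_L1_ball
    {X : Type*} [MeasurableSpace X] (μ : Measure X)
    (hμ0 : 0 < μ Set.univ) (hμfin : μ Set.univ < ⊤)
    (n : ℝ) (hn : 2 < n) (A C η : ℝ) (hA : 0 < A) (hC : 0 < C) (hη : 0 < η) :
    ¬ ∃ (φ u : ℕ → X → ℝ),
      (∀ k, Measurable (φ k)) ∧ (∀ k, Measurable (u k)) ∧
      (∀ k x, 0 < u k x) ∧
      (∀ k, ∫⁻ x, ENNReal.ofReal (Real.exp (n * φ k x)) ∂μ = ENNReal.ofReal A) ∧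
      (∀ k, ∫⁻ x, ENNReal.ofReal (Real.exp (2 * φ k x) / u k x) ∂μ ≤ ENNReal.ofReal C) ∧
      (∀ k, ∫⁻ x, ENNReal.ofReal |φ k x| ∂μ ≤ ENNReal.ofReal η) ∧
      (∀ k, Integrable (fun x => Real.exp (n * φ k x) * u k x) μ) ∧
      Tendsto (fun k => ∫⁻ x, ENNReal.ofReal (Real.exp (n * φ k x) * u k x) ∂μ)
        atTop (nhds 0) := by
  rintro ⟨φ, u, hφm, hum, hu, hvol, hcon, hL1, hint, hlim⟩
  -- basic constants
  set m : ℝ := (μ Set.univ).toReal with hm_def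
  have hm : 0 < m := ENNReal.toReal_pos hμ0.ne' hμfin.ne
  set s : ℝ := n / 2 + 1 with hs_def
  have hs : 0 < s := by simp only [hs_def]; linarith
  set t : ℝ := 2 * η / m with ht_def
  have ht : 0 < t := by positivity
  set δr : ℝ := Real.exp (-(s * t)) * (m / 2) with hδr_def
  have hδr : 0 < δr := by positivity
  set b : ℕ → ENNReal := fun k => ∫⁻ x, ENNReal.ofReal (Real.exp (s * φ k x)) ∂μ with hb_def
  -- Lower bound: b k ≥ ofReal δr for all k
  have hlow : ∀ k, ENNReal.ofReal δr ≤ b k := by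
    intro k
    set S : Set X := {x | ENNReal.ofReal t ≤ ENNReal.ofReal |φ k x|} with hS_def
    have hSm : MeasurableSet S :=
      measurableSet_le measurable_const ((hφm k).abs.ennreal_ofReal)
    have hmark : ENNReal.ofReal t * μ S ≤ ENNReal.ofReal η := by
      refine le_trans (mul_meas_ge_le_lintegral₀ ((hφm k).abs.ennreal_ofReal).aemeasurable _) ?_
      exact hL1 k
    have hμS : μ S ≤ ENNReal.ofReal (m / 2) := by
      have h1 : μ S ≤ ENNReal.ofReal η / ENNReal.ofReal t := by
        rw [ENNReal.le_div_iff_mul_le (Or.inl (ENNReal.ofReal_pos.mpr ht).ne')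
          (Or.inl ENNReal.ofReal_ne_top), mul_comm]
        exact hmark
      refine h1.trans ?_
      rw [← ENNReal.ofReal_div_of_pos ht]
      apply ENNReal.ofReal_le_ofReal
      have hη' : η ≠ 0 := hη.ne'
      have hm' : m ≠ 0 := hm.ne'
      have hEt : η / t = m / 2 := by
        rw [ht_def]
        rw [div_div_eq_mul_div]
        field_simp
      exact le_of_eq hEt
    have hμSc : ENNReal.ofReal (m / 2) ≤ μ Sᶜ := by
      have hcompl : μ Sᶜ = μ Set.univ - μ S :=
        measure_compl hSm (lt_of_le_of_lt hμS ENNReal.ofReal_lt_top).ne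
      rw [hcompl]
      have huniv : μ Set.univ = ENNReal.ofReal m := by
        rw [hm_def, ENNReal.ofReal_toReal hμfin.ne]
      rw [huniv]
      calc ENNReal.ofReal (m / 2) = ENNReal.ofReal (m - m / 2) := by ring_nf
        _ = ENNReal.ofReal m - ENNReal.ofReal (m / 2) := by
            rw [ENNReal.ofReal_sub _ (by positivity)]
        _ ≤ ENNReal.ofReal m - μ S := tsub_le_tsub le_rfl hμS
    -- pointwise lower bound on Sᶜ
    have hpt : ∀ x ∈ Sᶜ, ENNReal.ofReal (Real.exp (-(s * t))) ≤
        ENNReal.ofReal (Real.exp (s * φ k x)) := by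
      intro x hx
      apply ENNReal.ofReal_le_ofReal
      apply Real.exp_le_exp.mpr
      have hlt : |φ k x| < t := by
        have : ¬ (ENNReal.ofReal t ≤ ENNReal.ofReal |φ k x|) := hx
        rw [not_le] at this
        exact ((ENNReal.ofReal_lt_ofReal_iff ht).mp this)
      have h1 : -|φ k x| ≤ φ k x := neg_abs_le _
      nlinarith [abs_nonneg (φ k x)]
    calc ENNReal.ofReal δr
        = ENNReal.ofReal (Real.exp (-(s * t))) * ENNReal.ofReal (m / 2) := by
          rw [← ENNReal.ofReal_mul (Real.exp_nonneg _)]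
      _ ≤ ENNReal.ofReal (Real.exp (-(s * t))) * μ Sᶜ :=
          mul_le_mul_right hμSc _
      _ = ∫⁻ _ in Sᶜ, ENNReal.ofReal (Real.exp (-(s * t))) ∂μ := by
          rw [setLIntegral_const]
      _ ≤ ∫⁻ x in Sᶜ, ENNReal.ofReal (Real.exp (s * φ k x)) ∂μ := by
          apply setLIntegral_mono ((hφm k).const_mul s).exp.ennreal_ofReal
          exact hpt
      _ ≤ b k := setLIntegral_le_lintegral _ _
  -- Upper bound via Cauchy–Schwarz
  have hcs : ∀ k, b k ≤
      (∫⁻ x, ENNReal.ofReal (Real.exp (n * φ k x) * u k x) ∂μ) ^ (1/2 : ℝ) *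
      (ENNReal.ofReal C) ^ (1/2 : ℝ) := by
    intro k
    set f : X → ENNReal := fun x => ENNReal.ofReal (Real.exp (n / 2 * φ k x) * Real.sqrt (u k x))
      with hf_def
    set g : X → ENNReal := fun x => ENNReal.ofReal (Real.exp (φ k x) / Real.sqrt (u k x))
      with hg_def
    have hfm : AEMeasurable f μ := by
      exact (((hφm k).const_mul _).exp.mul (hum k).sqrt).ennreal_ofReal.aemeasurable
    have hgm : AEMeasurable g μ := by
      exact (((hφm k).exp.div (hum k).sqrt)).ennreal_ofReal.aemeasurable
    have hfg : ∀ x, ENNReal.ofReal (Real.exp (s * φ k x)) = f x * g x := by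
      intro x
      rw [hf_def, hg_def]
      rw [← ENNReal.ofReal_mul (by positivity)]
      congr 1
      have hux : 0 < Real.sqrt (u k x) := Real.sqrt_pos.mpr (hu k x)
      have hsp : s * φ k x = n / 2 * φ k x + φ k x := by rw [hs_def]; ring
      rw [hsp, Real.exp_add]
      field_simp
    have hf2 : ∀ x, f x ^ (2:ℝ) = ENNReal.ofReal (Real.exp (n * φ k x) * u k x) := by
      intro x
      rw [hf_def]
      have hpos : 0 < Real.exp (n / 2 * φ k x) * Real.sqrt (u k x) := by
        have := Real.sqrt_pos.mpr (hu k x); positivity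
      rw [ENNReal.ofReal_rpow_of_pos hpos]
      congr 1
      rw [show (2:ℝ) = ((2:ℕ):ℝ) by norm_num, Real.rpow_natCast]
      have h1 : Real.sqrt (u k x) ^ 2 = u k x := Real.sq_sqrt (hu k x).le
      have h2 : Real.exp (n / 2 * φ k x) ^ 2 = Real.exp (n * φ k x) := by
        rw [sq, ← Real.exp_add]; congr 1; ring
      push_cast
      rw [mul_pow, h1, h2]
    have hg2 : ∀ x, g x ^ (2:ℝ) = ENNReal.ofReal (Real.exp (2 * φ k x) / u k x) := by
      intro x
      rw [hg_def]
      have hpos : 0 < Real.exp (φ k x) / Real.sqrt (u k x) := by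
        have := Real.sqrt_pos.mpr (hu k x); positivity
      rw [ENNReal.ofReal_rpow_of_pos hpos]
      congr 1
      rw [show (2:ℝ) = ((2:ℕ):ℝ) by norm_num, Real.rpow_natCast]
      have h1 : Real.sqrt (u k x) ^ 2 = u k x := Real.sq_sqrt (hu k x).le
      have h2 : Real.exp (φ k x) ^ 2 = Real.exp (2 * φ k x) := by
        rw [sq, ← Real.exp_add]; congr 1; ring
      push_cast
      rw [div_pow, h1, h2]
    have hpq : (2:ℝ).HolderConjugate 2 := by
      rw [Real.holderConjugate_iff]; norm_num
    calc b k = ∫⁻ x, f x * g x ∂μ := by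
          rw [hb_def]; exact lintegral_congr fun x => hfg x
      _ ≤ (∫⁻ x, f x ^ (2:ℝ) ∂μ) ^ (1/(2:ℝ)) * (∫⁻ x, g x ^ (2:ℝ) ∂μ) ^ (1/(2:ℝ)) :=
          ENNReal.lintegral_mul_le_Lp_mul_Lq μ hpq hfm hgm
      _ ≤ (∫⁻ x, ENNReal.ofReal (Real.exp (n * φ k x) * u k x) ∂μ) ^ (1/2 : ℝ) *
          (ENNReal.ofReal C) ^ (1/2 : ℝ) := by
          have e1 : ∫⁻ x, f x ^ (2:ℝ) ∂μ = ∫⁻ x, ENNReal.ofReal (Real.exp (n * φ k x) * u k x) ∂μ :=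
            lintegral_congr fun x => hf2 x
          have e2 : (∫⁻ x, g x ^ (2:ℝ) ∂μ) ≤ ENNReal.ofReal C := by
            rw [lintegral_congr fun x => hg2 x]; exact hcon k
          rw [e1]
          exact mul_le_mul_right (ENNReal.rpow_le_rpow e2 (by norm_num)) _
  -- derive contradiction
  set ε : ℝ := (δr / (2 * Real.sqrt C)) ^ 2 with hε_def
  have hε : 0 < ε := by
    have := Real.sqrt_pos.mpr hC; positivity
  have hev : ∀ᶠ k in atTop,
      (∫⁻ x, ENNReal.ofReal (Real.exp (n * φ k x) * u k x) ∂μ) < ENNReal.ofReal ε :=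
    hlim.eventually_lt_const (ENNReal.ofReal_pos.mpr hε)
  rcases hev.exists with ⟨k, hk⟩
  have hub : b k < ENNReal.ofReal δr := by
    calc b k ≤ (∫⁻ x, ENNReal.ofReal (Real.exp (n * φ k x) * u k x) ∂μ) ^ (1/2 : ℝ) *
        (ENNReal.ofReal C) ^ (1/2 : ℝ) := hcs k
      _ ≤ (ENNReal.ofReal ε) ^ (1/2 : ℝ) * (ENNReal.ofReal C) ^ (1/2 : ℝ) := by
          gcongr
      _ = ENNReal.ofReal (Real.sqrt ε * Real.sqrt C) := by
          rw [ENNReal.ofReal_rpow_of_pos hε, ENNReal.ofReal_rpow_of_pos hC,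
            ← ENNReal.ofReal_mul (by positivity), ← Real.sqrt_eq_rpow, ← Real.sqrt_eq_rpow]
      _ < ENNReal.ofReal δr := by
          apply ENNReal.ofReal_lt_ofReal_iff hδr |>.mpr
          have hsC : 0 < Real.sqrt C := Real.sqrt_pos.mpr hC
          have hsε : Real.sqrt ε = δr / (2 * Real.sqrt C) := by
            rw [hε_def, Real.sqrt_sq (by positivity)]
          have hsC' : Real.sqrt C ≠ 0 := hsC.ne'
          have hkey : Real.sqrt ε * Real.sqrt C = δr / 2 := by
            rw [hsε]; field_simp
          rw [hkey]
          linarith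
  exact absurd (hlow k) (not_le.mpr hub)
end
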